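/- arXiv:2403.15626 — 2 statements merged into one kernel-verified Lean document; each statement's English description precedes it below -/
import Mathlib

section
/- One-step error recursion: under the setup where P_t is the true propagation of P_{t-1} through kernel k and P̂_t is the mixture Σ_k ω_k k(·|x^(k)) with weights ω_k = P̂_{t-1}(X^(k)), one has TV(P_t, P̂_t) ≤ TV(P_{t-1}, P̂_{t-1}) + Σ_{k=1}^{K} sup_{x ∈ X^(k)} s(x, x^(k)) · P̂_{t-1}(X^(k)). -/
/-!
Let `K` be the Markov kernel with density `k`. Then `P_t = P_{t-1} K` and
`P̂_t = ∑ⱼ P̂_{t-1}(Xⱼ) K(· | xⱼ)`, and the triangle inequality through `P̂_{t-1} K` splits the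
error in two. Markov kernels contract total variation, since `K(A | ·)` is a `[0, 1]`-valued
function and `|∫ f dμ - ∫ f dν| ≤ TV(μ, ν)` for such `f` (Hahn decomposition). For the other
term, `(P̂_{t-1} K)(A) - P̂_t(A) = ∑ⱼ ∫_{Xⱼ} (K(A | x) - K(A | xⱼ)) dP̂_{t-1}(x)`, and
`|K(A | x) - K(A | x')| ≤ s(x, x')` because `k x - k x'` has integral zero.
-/

open MeasureTheory

noncomputable def tv {α : Type*} [MeasurableSpace α] (P Q : Measure α) : ℝ :=
  ⨆ A : {A : Set α // MeasurableSet A}, |(P A.1).toReal - (Q A.1).toReal|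

open ProbabilityTheory

section TotalVariation

variable {α : Type*} [MeasurableSpace α]

lemma tv_bddAbove (P Q : Measure α) [IsFiniteMeasure P] [IsFiniteMeasure Q] :
    BddAbove (Set.range fun A : {A : Set α // MeasurableSet A} =>
      |(P A.1).toReal - (Q A.1).toReal|) := by
  refine ⟨P.real Set.univ + Q.real Set.univ, ?_⟩
  rintro _ ⟨A, rfl⟩
  change |P.real A.1 - Q.real A.1| ≤ _
  have hP : P.real A.1 ≤ P.real Set.univ := measureReal_mono (Set.subset_univ _)
  have hQ : Q.real A.1 ≤ Q.real Set.univ := measureReal_mono (Set.subset_univ _)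
  have hP0 : 0 ≤ P.real Set.univ := measureReal_nonneg
  have hQ0 : 0 ≤ Q.real Set.univ := measureReal_nonneg
  exact abs_sub_le_of_nonneg_of_le measureReal_nonneg (by linarith) measureReal_nonneg
    (by linarith)

lemma abs_sub_le_tv (P Q : Measure α) [IsFiniteMeasure P] [IsFiniteMeasure Q] {A : Set α}
    (hA : MeasurableSet A) : |(P A).toReal - (Q A).toReal| ≤ tv P Q :=
  le_ciSup (tv_bddAbove P Q) ⟨A, hA⟩

lemma tv_le_of_forall_le {P Q : Measure α} {c : ℝ}
    (h : ∀ A, MeasurableSet A → |(P A).toReal - (Q A).toReal| ≤ c) : tv P Q ≤ c :=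
  haveI : Nonempty {A : Set α // MeasurableSet A} := ⟨⟨∅, .empty⟩⟩
  ciSup_le fun A => h A.1 A.2

lemma tv_comm (P Q : Measure α) : tv P Q = tv Q P := by
  simp only [tv, abs_sub_comm]

lemma tv_triangle (P Q R : Measure α) [IsFiniteMeasure P] [IsFiniteMeasure Q]
    [IsFiniteMeasure R] : tv P R ≤ tv P Q + tv Q R :=
  tv_le_of_forall_le fun _ hA => (abs_sub_le _ _ _).trans
    (add_le_add (abs_sub_le_tv P Q hA) (abs_sub_le_tv Q R hA))

-- On a Hahn set `u` for `μ - ν`, `∫_u f d(μ - ν) = (μ - ν) u - ∫_u (1 - f) d(μ - ν) ≤ (μ - ν) u`.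
lemma integral_sub_le_tv (μ ν : Measure α) [IsFiniteMeasure μ] [IsFiniteMeasure ν]
    {f : α → ℝ} (hf : Measurable f) (hf0 : ∀ x, 0 ≤ f x) (hf1 : ∀ x, f x ≤ 1) :
    ∫ x, f x ∂μ - ∫ x, f x ∂ν ≤ tv μ ν := by
  obtain ⟨u, hu, hνμ, hμν⟩ := hahn_decomposition μ ν
  have hint : ∀ (ρ : Measure α) [IsFiniteMeasure ρ], Integrable f ρ := fun ρ _ =>
    (integrable_const (1 : ℝ)).mono' hf.aestronglyMeasurable
      (ae_of_all _ fun x => by simpa [abs_of_nonneg (hf0 x)] using hf1 x)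
  have restrict_u : ν.restrict u ≤ μ.restrict u := Measure.le_iff.2 fun t ht => by
    simpa only [Measure.restrict_apply ht] using hνμ _ (ht.inter hu) Set.inter_subset_right
  have restrict_uc : μ.restrict uᶜ ≤ ν.restrict uᶜ := Measure.le_iff.2 fun t ht => by
    simpa only [Measure.restrict_apply ht] using hμν _ (ht.inter hu.compl) Set.inter_subset_right
  have on_u : ∫ x in u, (1 - f x) ∂ν ≤ ∫ x in u, (1 - f x) ∂μ :=
    integral_mono_measure restrict_u (ae_of_all _ fun x => sub_nonneg.2 (hf1 x))
      ((integrable_const 1).sub (hint μ)).restrict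
  have on_uc : ∫ x in uᶜ, f x ∂μ ≤ ∫ x in uᶜ, f x ∂ν :=
    integral_mono_measure restrict_uc (ae_of_all _ hf0) (hint ν).restrict
  have one_sub : ∀ (ρ : Measure α) [IsFiniteMeasure ρ],
      ∫ x in u, (1 - f x) ∂ρ = (ρ u).toReal - ∫ x in u, f x ∂ρ := fun ρ _ => by
    rw [integral_sub (integrable_const 1) (hint ρ).restrict, setIntegral_const, smul_eq_mul,
      mul_one, Measure.real]
  rw [← integral_add_compl hu (hint μ), ← integral_add_compl hu (hint ν)]
  linarith [one_sub μ, one_sub ν, (le_abs_self _).trans (abs_sub_le_tv μ ν hu)]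

lemma abs_integral_sub_le_tv (μ ν : Measure α) [IsFiniteMeasure μ] [IsFiniteMeasure ν]
    {f : α → ℝ} (hf : Measurable f) (hf0 : ∀ x, 0 ≤ f x) (hf1 : ∀ x, f x ≤ 1) :
    |∫ x, f x ∂μ - ∫ x, f x ∂ν| ≤ tv μ ν :=
  abs_sub_le_iff.2 ⟨integral_sub_le_tv μ ν hf hf0 hf1,
    tv_comm μ ν ▸ integral_sub_le_tv ν μ hf hf0 hf1⟩

end TotalVariation

section KernelComposition

variable {α β : Type*} [MeasurableSpace α] [MeasurableSpace β]

lemma toReal_comp_apply (κ : Kernel α β) [IsFiniteKernel κ] (μ : Measure α) {A : Set β}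
    (hA : MeasurableSet A) : ((κ ∘ₘ μ) A).toReal = ∫ x, (κ x A).toReal ∂μ := by
  rw [Measure.bind_apply hA κ.aemeasurable,
    integral_toReal (κ.measurable_coe hA).aemeasurable (ae_of_all _ fun _ => measure_lt_top _ _)]

lemma tv_comp_le (κ : Kernel α β) [IsMarkovKernel κ] (μ ν : Measure α) [IsFiniteMeasure μ]
    [IsFiniteMeasure ν] : tv (κ ∘ₘ μ) (κ ∘ₘ ν) ≤ tv μ ν :=
  tv_le_of_forall_le fun _ hA => by
    rw [toReal_comp_apply κ μ hA, toReal_comp_apply κ ν hA]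
    exact abs_integral_sub_le_tv μ ν (κ.measurable_coe hA).ennreal_toReal
      (fun _ => ENNReal.toReal_nonneg) (fun x => measureReal_le_one (μ := κ x))

lemma tv_comp_le_sum_of_partition {ι : Type*} [Fintype ι] (κ : Kernel α β) [IsMarkovKernel κ]
    (μ : Measure α) [IsFiniteMeasure μ] {X : ι → Set α} (hX_meas : ∀ j, MeasurableSet (X j))
    (hX_disj : Pairwise (Function.onFun Disjoint X)) (hX_cover : ⋃ j, X j = Set.univ)
    (xr : ι → α) {c : ι → ℝ} (hc : ∀ j, ∀ x ∈ X j, tv (κ x) (κ (xr j)) ≤ c j) :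
    tv (κ ∘ₘ μ) (∑ j, μ (X j) • κ (xr j)) ≤ ∑ j, c j * (μ (X j)).toReal :=
  tv_le_of_forall_le fun A hA => by
    set g : α → ℝ := fun x => (κ x A).toReal
    have hg_int : Integrable g μ :=
      (integrable_const (1 : ℝ)).mono' (κ.measurable_coe hA).ennreal_toReal.aestronglyMeasurable
        (ae_of_all _ fun x => by
          rw [Real.norm_of_nonneg ENNReal.toReal_nonneg]; exact measureReal_le_one)
    have h_comp : ((κ ∘ₘ μ) A).toReal = ∑ j, ∫ x in X j, g x ∂μ := by
      rw [toReal_comp_apply κ μ hA, ← integral_iUnion_fintype hX_meas hX_disj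
        fun _ => hg_int.integrableOn, hX_cover, Measure.restrict_univ]
    have h_mix : ((∑ j, μ (X j) • κ (xr j)) A).toReal = ∑ j, ∫ _ in X j, g (xr j) ∂μ := by
      simp only [Measure.finsetSum_apply, Measure.smul_apply, smul_eq_mul]
      rw [ENNReal.toReal_sum fun j _ => by finiteness]
      simp only [setIntegral_const, smul_eq_mul, ENNReal.toReal_mul, Measure.real, g]
    rw [h_comp, h_mix, ← Finset.sum_sub_distrib]
    refine (Finset.abs_sum_le_sum_abs _ _).trans (Finset.sum_le_sum fun j _ => ?_)
    rw [← integral_sub hg_int.integrableOn (integrable_const _), ← Real.norm_eq_abs]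
    exact norm_setIntegral_le_of_norm_le_const (measure_lt_top _ _) fun x hx =>
      (abs_sub_le_tv (κ x) (κ (xr j)) hA).trans (hc j x hx)

end KernelComposition

section DensityKernel

variable {α β : Type*} [MeasurableSpace α] [MeasurableSpace β] {ν : Measure β}

lemma abs_setIntegral_le_half_integral_abs {h : β → ℝ} (hh : Integrable h ν)
    (h_zero : ∫ y, h y ∂ν = 0) {A : Set β} (hA : MeasurableSet A) :
    |∫ y in A, h y ∂ν| ≤ 1 / 2 * ∫ y, |h y| ∂ν := by
  have h_compl : ∫ y in Aᶜ, h y ∂ν = -∫ y in A, h y ∂ν := by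
    linarith [integral_add_compl hA hh]
  have on_A : |∫ y in A, h y ∂ν| ≤ ∫ y in A, |h y| ∂ν := abs_integral_le_integral_abs
  have on_Ac : |∫ y in Aᶜ, h y ∂ν| ≤ ∫ y in Aᶜ, |h y| ∂ν := abs_integral_le_integral_abs
  rw [h_compl, abs_neg] at on_Ac
  linarith [integral_add_compl hA hh.abs]

lemma toReal_withDensity_ofReal_apply {f : β → ℝ} (hf : Integrable f ν) (hf0 : ∀ y, 0 ≤ f y)
    {A : Set β} (hA : MeasurableSet A) :
    (ν.withDensity (fun y => ENNReal.ofReal (f y)) A).toReal = ∫ y in A, f y ∂ν := by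
  rw [withDensity_apply _ hA, ← ofReal_integral_eq_lintegral_ofReal hf.restrict
    (ae_of_all _ hf0), ENNReal.toReal_ofReal (setIntegral_nonneg hA fun y _ => hf0 y)]

lemma tv_withDensity_ofReal_le {f g : β → ℝ} (hf : Integrable f ν) (hg : Integrable g ν)
    (hf0 : ∀ y, 0 ≤ f y) (hg0 : ∀ y, 0 ≤ g y) (hfg : ∫ y, f y ∂ν = ∫ y, g y ∂ν) :
    tv (ν.withDensity fun y => ENNReal.ofReal (f y)) (ν.withDensity fun y => ENNReal.ofReal (g y))
      ≤ 1 / 2 * ∫ y, |f y - g y| ∂ν :=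
  tv_le_of_forall_le fun _ hA => by
    rw [toReal_withDensity_ofReal_apply hf hf0 hA, toReal_withDensity_ofReal_apply hg hg0 hA,
      ← integral_sub hf.restrict hg.restrict]
    exact abs_setIntegral_le_half_integral_abs (h := fun y => f y - g y) (hf.sub hg)
      (by rw [integral_sub hf hg, hfg, sub_self]) hA

lemma integral_abs_sub_le_integral_add {f g : β → ℝ} (hf : Integrable f ν) (hg : Integrable g ν)
    (hf0 : ∀ y, 0 ≤ f y) (hg0 : ∀ y, 0 ≤ g y) :
    ∫ y, |f y - g y| ∂ν ≤ ∫ y, f y ∂ν + ∫ y, g y ∂ν := by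
  rw [← integral_add hf hg]
  exact integral_mono (hf.sub hg).abs (hf.add hg) fun y =>
    abs_sub_le_iff.2 ⟨by linarith [hg0 y], by linarith [hf0 y]⟩

variable [SFinite ν] {k : α → β → ℝ}

noncomputable def densityKernel (ν : Measure β) [SFinite ν] (k : α → β → ℝ) : Kernel α β :=
  Kernel.withDensity (Kernel.const α ν) fun x y => ENNReal.ofReal (k x y)

lemma densityKernel_apply (hk : Measurable (Function.uncurry k)) (x : α) :
    densityKernel ν k x = ν.withDensity fun y => ENNReal.ofReal (k x y) := by
  rw [densityKernel, Kernel.withDensity_apply _ hk.ennreal_ofReal, Kernel.const_apply]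

lemma isMarkovKernel_densityKernel (hk : Measurable (Function.uncurry k))
    (hk0 : ∀ x y, 0 ≤ k x y) (hk1 : ∀ x, ∫ y, k x y ∂ν = 1) :
    IsMarkovKernel (densityKernel ν k) :=
  ⟨fun x => ⟨by
    rw [densityKernel_apply hk, withDensity_apply _ .univ, Measure.restrict_univ,
      ← ofReal_integral_eq_lintegral_ofReal (integrable_of_integral_eq_one (hk1 x))
        (ae_of_all _ (hk0 x)), hk1 x, ENNReal.ofReal_one]⟩⟩

lemma densityKernel_comp_withDensity {μ : Measure α} [SFinite μ]
    (hk : Measurable (Function.uncurry k)) (hk0 : ∀ x y, 0 ≤ k x y)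
    (hk1 : ∀ x, ∫ y, k x y ∂ν = 1) {p : α → ℝ} (hp : Measurable p) (hp0 : ∀ x, 0 ≤ p x)
    (hp_int : Integrable p μ) :
    densityKernel ν k ∘ₘ μ.withDensity (fun x => ENNReal.ofReal (p x)) =
      ν.withDensity fun y => ENNReal.ofReal (∫ x, k x y * p x ∂μ) := by
  have hF : Measurable fun z : α × β => k z.1 z.2 * p z.1 := hk.mul (hp.comp measurable_fst)
  have hF_int : Integrable (fun z : α × β => k z.1 z.2 * p z.1) (μ.prod ν) := by
    refine (integrable_prod_iff hF.aestronglyMeasurable).2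
      ⟨ae_of_all _ fun x => (integrable_of_integral_eq_one (hk1 x)).mul_const (p x), ?_⟩
    simpa [abs_of_nonneg (hk0 _ _), abs_of_nonneg (hp0 _), integral_mul_const, hk1] using hp_int
  -- Integrability on the product makes the inner integral finite for a.e. `y`, so that
  -- `ENNReal.ofReal` commutes with it.
  have h_density : ∀ᵐ y ∂ν, ∫⁻ x, ENNReal.ofReal (p x) * ENNReal.ofReal (k x y) ∂μ =
      ENNReal.ofReal (∫ x, k x y * p x ∂μ) := by
    filter_upwards [hF_int.prod_left_ae] with y hy
    rw [ofReal_integral_eq_lintegral_ofReal hy (ae_of_all _ fun x => mul_nonneg (hk0 x y) (hp0 x))]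
    simp_rw [ENNReal.ofReal_mul (hk0 _ y), mul_comm]
  ext A hA
  rw [Measure.bind_apply hA (Kernel.aemeasurable _), lintegral_withDensity_eq_lintegral_mul _
    hp.ennreal_ofReal (Kernel.measurable_coe _ hA), withDensity_apply _ hA]
  calc ∫⁻ x, ENNReal.ofReal (p x) * densityKernel ν k x A ∂μ
      = ∫⁻ x, ∫⁻ y in A, ENNReal.ofReal (p x) * ENNReal.ofReal (k x y) ∂ν ∂μ := by
        refine lintegral_congr fun x => ?_
        rw [densityKernel_apply hk, withDensity_apply _ hA,
          lintegral_const_mul _ (hk.of_uncurry_left.ennreal_ofReal)]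
    _ = ∫⁻ y in A, ∫⁻ x, ENNReal.ofReal (p x) * ENNReal.ofReal (k x y) ∂μ ∂ν :=
        lintegral_lintegral_swap ((hp.comp measurable_fst).ennreal_ofReal.mul
          hk.ennreal_ofReal).aemeasurable
    _ = ∫⁻ y in A, ENNReal.ofReal (∫ x, k x y * p x ∂μ) ∂ν :=
        lintegral_congr_ae (ae_restrict_of_ae h_density)

lemma tv_densityKernel_le (hk : Measurable (Function.uncurry k)) (hk0 : ∀ x y, 0 ≤ k x y)
    (hk1 : ∀ x, ∫ y, k x y ∂ν = 1) (x x' : α) :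
    tv (densityKernel ν k x) (densityKernel ν k x') ≤ 1 / 2 * ∫ y, |k x y - k x' y| ∂ν := by
  rw [densityKernel_apply hk, densityKernel_apply hk]
  exact tv_withDensity_ofReal_le (integrable_of_integral_eq_one (hk1 x))
    (integrable_of_integral_eq_one (hk1 x')) (hk0 x) (hk0 x') (by rw [hk1, hk1])

end DensityKernel

theorem tv_one_step_recursion_general {d K : ℕ}
    (k : (Fin d → ℝ) → (Fin d → ℝ) → ℝ)
    (hk_meas : Measurable (Function.uncurry k))
    (hk_nonneg : ∀ x y, 0 ≤ k x y)
    (hk_prob : ∀ x, ∫ y, k x y = 1)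
    -- partition with representative points
    (X : Fin K → Set (Fin d → ℝ))
    (hX_meas : ∀ j, MeasurableSet (X j))
    (hX_disj : Pairwise (Function.onFun Disjoint X))
    (hX_cover : (⋃ j, X j) = Set.univ)
    (xr : Fin K → (Fin d → ℝ))
    -- true density at time t-1 and its propagation to time t
    (pPrev pNext : (Fin d → ℝ) → ℝ)
    (hp_meas : Measurable pPrev) (hp_nonneg : ∀ x, 0 ≤ pPrev x)
    (hp_int : ∫ x, pPrev x = 1)
    (hpNext : ∀ y, pNext y = ∫ x, k x y * pPrev x)
    (Pprev Pnext : Measure (Fin d → ℝ))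
    (hPprev : Pprev = volume.withDensity (fun x => ENNReal.ofReal (pPrev x)))
    (hPnext : Pnext = volume.withDensity (fun y => ENNReal.ofReal (pNext y)))
    -- approximating measure at time t-1 and the mixture at time t
    (PhatPrev PhatNext : Measure (Fin d → ℝ)) [IsProbabilityMeasure PhatPrev]
    (hPhatNext : PhatNext =
      ∑ j, PhatPrev (X j) • volume.withDensity (fun y => ENNReal.ofReal (k (xr j) y)))
    -- the kernel total-variation function s
    (s : (Fin d → ℝ) → (Fin d → ℝ) → ℝ)
    (hs : ∀ x x', s x x' = (1 / 2) * ∫ y, |k x y - k x' y|) :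
    tv Pnext PhatNext ≤
      tv Pprev PhatPrev +
        ∑ j, (⨆ x ∈ X j, s x (xr j)) * (PhatPrev (X j)).toReal := by
  have hk_int : ∀ x, Integrable (k x) := fun x => integrable_of_integral_eq_one (hk_prob x)
  set κ := densityKernel volume k
  have : IsMarkovKernel κ := isMarkovKernel_densityKernel hk_meas hk_nonneg hk_prob
  have : IsFiniteMeasure Pprev :=
    hPprev ▸ isFiniteMeasure_withDensity_ofReal (integrable_of_integral_eq_one hp_int).2
  have : ∀ j, IsFiniteMeasure (PhatPrev (X j) • κ (xr j)) := fun j =>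
    (κ (xr j)).smul_finite (measure_ne_top _ _)
  have hPnext' : Pnext = κ ∘ₘ Pprev := by
    rw [hPnext, hPprev, densityKernel_comp_withDensity hk_meas hk_nonneg hk_prob hp_meas
      hp_nonneg (integrable_of_integral_eq_one hp_int)]
    simp_rw [hpNext]
  have hPhatNext' : PhatNext = ∑ j, PhatPrev (X j) • κ (xr j) := by
    simp_rw [hPhatNext, κ, densityKernel_apply hk_meas]
  have hs_le_iSup : ∀ j, ∀ x ∈ X j, s x (xr j) ≤ ⨆ x ∈ X j, s x (xr j) := fun j x hx =>
    le_ciSup₂ (f := fun x (_ : x ∈ X j) => s x (xr j)) ⟨1, fun _ h => by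
      obtain ⟨x', _, rfl⟩ := Set.mem_iUnion.1 h
      linarith [hs x' (xr j), integral_abs_sub_le_integral_add (hk_int x') (hk_int (xr j))
        (hk_nonneg x') (hk_nonneg (xr j)), hk_prob x', hk_prob (xr j)]⟩ x hx
  rw [hPnext', hPhatNext']
  calc tv (κ ∘ₘ Pprev) (∑ j, PhatPrev (X j) • κ (xr j))
      ≤ tv (κ ∘ₘ Pprev) (κ ∘ₘ PhatPrev) + tv (κ ∘ₘ PhatPrev) (∑ j, PhatPrev (X j) • κ (xr j)) :=
        tv_triangle _ _ _
    _ ≤ _ := add_le_add (tv_comp_le κ _ _) (tv_comp_le_sum_of_partition κ PhatPrev hX_meas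
        hX_disj hX_cover xr fun j x hx =>
          (hs x (xr j) ▸ tv_densityKernel_le hk_meas hk_nonneg hk_prob x (xr j)).trans
            (hs_le_iSup j x hx))

/-- one-step error recursion for the mixture approximation scheme. -/
theorem tv_one_step_recursion {d K : ℕ}
    (k : (Fin d → ℝ) → (Fin d → ℝ) → ℝ)
    (hk_meas : Measurable (Function.uncurry k))
    (hk_nonneg : ∀ x y, 0 ≤ k x y)
    (hk_prob : ∀ x, ∫ y, k x y = 1)
    -- partition with representative points
    (X : Fin K → Set (Fin d → ℝ))
    (hX_meas : ∀ j, MeasurableSet (X j))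
    (hX_disj : Pairwise (Function.onFun Disjoint X))
    (hX_cover : (⋃ j, X j) = Set.univ)
    (xr : Fin K → (Fin d → ℝ)) (hxr : ∀ j, xr j ∈ X j)
    -- true density at time t-1 and its propagation to time t
    (pPrev pNext : (Fin d → ℝ) → ℝ)
    (hp_meas : Measurable pPrev) (hp_nonneg : ∀ x, 0 ≤ pPrev x)
    (hp_int : ∫ x, pPrev x = 1)
    (hpNext : ∀ y, pNext y = ∫ x, k x y * pPrev x)
    (Pprev Pnext : Measure (Fin d → ℝ))
    (hPprev : Pprev = volume.withDensity (fun x => ENNReal.ofReal (pPrev x)))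
    (hPnext : Pnext = volume.withDensity (fun y => ENNReal.ofReal (pNext y)))
    -- approximating measure at time t-1 and the mixture at time t
    (PhatPrev PhatNext : Measure (Fin d → ℝ)) [IsProbabilityMeasure PhatPrev]
    (hPhatNext : PhatNext =
      ∑ j, PhatPrev (X j) • volume.withDensity (fun y => ENNReal.ofReal (k (xr j) y)))
    -- the kernel total-variation function s
    (s : (Fin d → ℝ) → (Fin d → ℝ) → ℝ)
    (hs : ∀ x x', s x x' = (1 / 2) * ∫ y, |k x y - k x' y|) :
    tv Pnext PhatNext ≤
      tv Pprev PhatPrev +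
        ∑ j, (⨆ x ∈ X j, s x (xr j)) * (PhatPrev (X j)).toReal :=
  tv_one_step_recursion_general k hk_meas hk_nonneg hk_prob X hX_meas hX_disj hX_cover xr pPrev
    pNext hp_meas hp_nonneg hp_int hpNext Pprev Pnext hPprev hPnext PhatPrev PhatNext hPhatNext s hs
end

section
/- Cumulative error bound over a horizon: under the iterative mixture approximation scheme with TV(P_0, P̂_0) = 0, for any time s ≥ 1, TV(P_s, P̂_s) ≤ Σ_{t=1}^{s} Σ_{k=1}^{K_{t-1}} sup_{x ∈ X^(k)_{t-1}} s(x, x^(k)_{t-1}) · P̂_{t-1}(X^(k)_{t-1}). -/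
open MeasureTheory
open scoped ENNReal

noncomputable def edd (a b : ℝ≥0∞) : ℝ≥0∞ := (a - b) + (b - a)

lemma edd_self (a : ℝ≥0∞) : edd a a = 0 := by simp [edd]

lemma edd_triangle (a b c : ℝ≥0∞) : edd a c ≤ edd a b + edd b c := by
  have h1 : ∀ x y z : ℝ≥0∞, x - z ≤ (x - y) + (y - z) := by
    intro x y z
    rw [tsub_le_iff_right]
    calc x ≤ (x - y) + y := le_tsub_add
      _ ≤ (x - y) + ((y - z) + z) := by gcongr; exact le_tsub_add
      _ = (x - y) + (y - z) + z := (add_assoc _ _ _).symm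
  calc edd a c = (a - c) + (c - a) := rfl
    _ ≤ ((a - b) + (b - c)) + ((c - b) + (b - a)) := add_le_add (h1 a b c) (h1 c b a)
    _ = edd a b + edd b c := by simp only [edd]; ring

lemma edd_mul_right (a b c : ℝ≥0∞) : edd (a * c) (b * c) ≤ edd a b * c := by
  have h : ∀ x y : ℝ≥0∞, x * c - y * c ≤ (x - y) * c := by
    intro x y
    rw [tsub_le_iff_right]
    calc x * c ≤ ((x - y) + y) * c := by gcongr; exact le_tsub_add
      _ = (x - y) * c + y * c := add_mul _ _ _
  calc edd (a * c) (b * c) = (a * c - b * c) + (b * c - a * c) := rfl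
    _ ≤ (a - b) * c + (b - a) * c := add_le_add (h a b) (h b a)
    _ = edd a b * c := (add_mul _ _ _).symm

lemma edd_mul_left (a b c : ℝ≥0∞) : edd (c * a) (c * b) ≤ c * edd a b := by
  rw [mul_comm c a, mul_comm c b, mul_comm c]
  exact edd_mul_right a b c

lemma edd_ofReal {a b : ℝ} (ha : 0 ≤ a) (hb : 0 ≤ b) :
    edd (ENNReal.ofReal a) (ENNReal.ofReal b) = ENNReal.ofReal |a - b| := by
  rcases le_total a b with h | h
  · rw [edd, tsub_eq_zero_of_le (ENNReal.ofReal_le_ofReal h), zero_add,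
      ← ENNReal.ofReal_sub b ha, abs_of_nonpos (by linarith), neg_sub]
  · rw [edd, tsub_eq_zero_of_le (ENNReal.ofReal_le_ofReal h), add_zero,
      ← ENNReal.ofReal_sub a hb, abs_of_nonneg (by linarith)]

lemma edd_lintegral {α : Type*} [MeasurableSpace α] (μ : Measure α) {f g : α → ℝ≥0∞}
    (hf : Measurable f) (hg : Measurable g) :
    edd (∫⁻ x, f x ∂μ) (∫⁻ x, g x ∂μ) ≤ ∫⁻ x, edd (f x) (g x) ∂μ := by
  have : ∫⁻ x, edd (f x) (g x) ∂μ = (∫⁻ x, f x - g x ∂μ) + ∫⁻ x, g x - f x ∂μ :=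
    lintegral_add_left (hf.sub hg) _
  rw [this]
  exact add_le_add (lintegral_sub_le g f hg) (lintegral_sub_le f g hf)

lemma toReal_sub_le' {a b : ℝ≥0∞} (ha : a ≠ ⊤) (hb : b ≠ ⊤) :
    a.toReal - b.toReal ≤ (a - b).toReal := by
  rcases le_total b a with h | h
  · rw [ENNReal.toReal_sub_of_le h ha]
  · have : a.toReal ≤ b.toReal := ENNReal.toReal_mono hb h
    have h0 : (0:ℝ) ≤ (a - b).toReal := ENNReal.toReal_nonneg
    linarith


/-- cumulative error bound over a horizon for the iterative mixture
approximation scheme. -/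
theorem tv_cumulative_bound {d : ℕ}
    (k : (Fin d → ℝ) → (Fin d → ℝ) → ℝ)
    (hk_meas : Measurable (Function.uncurry k))
    (hk_nonneg : ∀ x y, 0 ≤ k x y)
    (hk_prob : ∀ x, ∫ y, k x y = 1)
    -- for each time t, a finite measurable partition of ℝ^d with representatives
    (K : ℕ → ℕ)
    (X : (t : ℕ) → Fin (K t) → Set (Fin d → ℝ))
    (hX_meas : ∀ t j, MeasurableSet (X t j))
    (hX_disj : ∀ t, Pairwise (Function.onFun Disjoint (X t)))
    (hX_cover : ∀ t, (⋃ j, X t j) = Set.univ)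
    (xr : (t : ℕ) → Fin (K t) → (Fin d → ℝ)) (hxr : ∀ t j, xr t j ∈ X t j)
    -- the true densities, propagated through the kernel
    (p : ℕ → (Fin d → ℝ) → ℝ)
    (hp_meas : ∀ t, Measurable (p t)) (hp_nonneg : ∀ t x, 0 ≤ p t x)
    (hp0_int : ∫ x, p 0 x = 1)
    (hp_rec : ∀ t y, p (t + 1) y = ∫ x, k x y * p t x)
    (P : ℕ → Measure (Fin d → ℝ))
    (hP : ∀ t, P t = volume.withDensity (fun x => ENNReal.ofReal (p t x)))
    -- the approximating mixtures, with P̂₀ = P₀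
    (Phat : ℕ → Measure (Fin d → ℝ))
    (hPhat0 : Phat 0 = P 0)
    (hPhat_rec : ∀ t, Phat (t + 1) =
      ∑ j, Phat t (X t j) • volume.withDensity (fun y => ENNReal.ofReal (k (xr t j) y)))
    -- the kernel total-variation function s
    (s : (Fin d → ℝ) → (Fin d → ℝ) → ℝ)
    (hs : ∀ x x', s x x' = (1 / 2) * ∫ y, |k x y - k x' y|) :
    ∀ sTime : ℕ, 1 ≤ sTime →
      tv (P sTime) (Phat sTime) ≤
        ∑ t ∈ Finset.range sTime, ∑ j,
          (⨆ x ∈ X t j, s x (xr t j)) * (Phat t (X t j)).toReal := by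
  intro sT _
  classical
  -- section measurability
  have hk_mx : ∀ x, Measurable (k x) := fun x => hk_meas.comp measurable_prodMk_left
  have hk_my : ∀ y, Measurable (fun x => k x y) := fun y => hk_meas.comp measurable_prodMk_right
  have hk_int : ∀ x, Integrable (k x) := by
    intro x; by_contra h
    exact one_ne_zero ((hk_prob x).symm.trans (integral_undef h))
  have hκ_meas : Measurable (Function.uncurry fun x y => ENNReal.ofReal (k x y)) :=
    hk_meas.ennreal_ofReal
  have hκ_one : ∀ x, ∫⁻ y, ENNReal.ofReal (k x y) = 1 := by
    intro x
    rw [← ofReal_integral_eq_lintegral_ofReal (hk_int x)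
      (Filter.Eventually.of_forall (hk_nonneg x)), hk_prob x, ENNReal.ofReal_one]
  -- densities of Phat
  set g : ℕ → (Fin d → ℝ) → ℝ≥0∞ := fun t => Nat.casesOn t
    (fun y => ENNReal.ofReal (p 0 y))
    (fun t' y => ∑ j, Phat t' (X t' j) * ENNReal.ofReal (k (xr t' j) y)) with hg
  have hg_meas : ∀ t, Measurable (g t) := by
    intro t
    cases t with
    | zero => exact (hp_meas 0).ennreal_ofReal
    | succ t => exact Finset.measurable_sum _ fun j _ =>
        ((hk_mx (xr t j)).ennreal_ofReal).const_mul _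
  have hPhat_apply : ∀ t A, MeasurableSet A → Phat t A = ∫⁻ y in A, g t y := by
    intro t A hA
    cases t with
    | zero => rw [hPhat0, hP 0, withDensity_apply _ hA]; rfl
    | succ t =>
      rw [hPhat_rec t, Measure.finset_sum_apply]
      have : ∀ j : Fin (K t), (Phat t (X t j) • volume.withDensity
          fun y => ENNReal.ofReal (k (xr t j) y)) A
          = Phat t (X t j) * ∫⁻ y in A, ENNReal.ofReal (k (xr t j) y) := by
        intro j
        rw [Measure.smul_apply, smul_eq_mul, withDensity_apply _ hA]
      rw [Finset.sum_congr rfl fun j _ => this j]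
      rw [show (∫⁻ y in A, g (t+1) y) = ∑ j, Phat t (X t j) * ∫⁻ y in A,
        ENNReal.ofReal (k (xr t j) y) from ?_]
      rw [lintegral_finset_sum _ fun j _ => ((hk_mx (xr t j)).ennreal_ofReal).const_mul _]
      exact Finset.sum_congr rfl fun j _ =>
        lintegral_const_mul _ (hk_mx (xr t j)).ennreal_ofReal
  -- bounds for s
  have hs_nonneg : ∀ x x', 0 ≤ s x x' := by
    intro x x'; rw [hs]
    have : 0 ≤ ∫ y, |k x y - k x' y| := integral_nonneg fun y => abs_nonneg _
    linarith
  have habs_int : ∀ x x', Integrable (fun y => |k x y - k x' y|) := fun x x' =>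
    ((hk_int x).sub (hk_int x')).abs
  have hs_le_one : ∀ x x', s x x' ≤ 1 := by
    intro x x'; rw [hs]
    have h1 : ∫ y, |k x y - k x' y| ≤ ∫ y, (k x y + k x' y) := by
      refine integral_mono (habs_int x x') ((hk_int x).add (hk_int x')) fun y => ?_
      have h := abs_add_le (k x y) (-(k x' y))
      rw [abs_neg, abs_of_nonneg (hk_nonneg x y), abs_of_nonneg (hk_nonneg x' y)] at h
      simpa [sub_eq_add_neg] using h
    rw [integral_add (hk_int x) (hk_int x'), hk_prob, hk_prob] at h1
    linarith
  set S : (t : ℕ) → Fin (K t) → ℝ := fun t j => ⨆ x ∈ X t j, s x (xr t j) with hSdef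
  have hS_mem : ∀ t j x, x ∈ X t j → s x (xr t j) ≤ S t j := by
    intro t j x hx
    have hbdd : BddAbove (Set.range fun x => ⨆ _ : x ∈ X t j, s x (xr t j)) := by
      refine ⟨1, ?_⟩
      rintro _ ⟨x', rfl⟩
      exact Real.iSup_le (fun _ => hs_le_one _ _) zero_le_one
    have h1 : (⨆ _ : x ∈ X t j, s x (xr t j)) = s x (xr t j) := ciSup_pos hx
    calc s x (xr t j) = ⨆ _ : x ∈ X t j, s x (xr t j) := h1.symm
      _ ≤ S t j := le_ciSup hbdd x
  have hS_nonneg : ∀ t j, 0 ≤ S t j :=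
    fun t j => le_trans (hs_nonneg _ _) (hS_mem t j (xr t j) (hxr t j))
  have hkd : ∀ x x', (∫⁻ y, ENNReal.ofReal |k x y - k x' y|) = ENNReal.ofReal (2 * s x x') := by
    intro x x'
    rw [← ofReal_integral_eq_lintegral_ofReal (habs_int x x')
      (Filter.Eventually.of_forall fun y => abs_nonneg _)]
    congr 1
    rw [hs]; ring
  have hPhat_part : ∀ t, ∑ j, Phat t (X t j) = Phat t Set.univ := by
    intro t
    rw [← hX_cover t, measure_iUnion (hX_disj t) (hX_meas t), tsum_fintype]
  -- main induction
  have main : ∀ t, Integrable (p t) ∧ (∫⁻ y, ENNReal.ofReal (p t y)) = 1 ∧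
      Phat t Set.univ = 1 ∧
      (∫⁻ y, edd (ENNReal.ofReal (p t y)) (g t y))
        ≤ ∑ t' ∈ Finset.range t, ∑ j, ENNReal.ofReal (2 * S t' j) * Phat t' (X t' j) := by
    intro t
    induction t with
    | zero =>
      have hint : Integrable (p 0) := by
        by_contra h; exact one_ne_zero (hp0_int.symm.trans (integral_undef h))
      have h1 : (∫⁻ y, ENNReal.ofReal (p 0 y)) = 1 := by
        rw [← ofReal_integral_eq_lintegral_ofReal hint
          (Filter.Eventually.of_forall (hp_nonneg 0)), hp0_int, ENNReal.ofReal_one]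
      refine ⟨hint, h1, ?_, ?_⟩
      · rw [hPhat_apply 0 _ MeasurableSet.univ, setLIntegral_univ]
        exact h1
      · have hz : ∀ y, edd (ENNReal.ofReal (p 0 y)) (g 0 y) = 0 := fun y => by
          have hgy : g 0 y = ENNReal.ofReal (p 0 y) := rfl
          simp [edd, hgy]
        simp [lintegral_congr hz]
    | succ t ih =>
      obtain ⟨hint, hf1, hm, hD⟩ := ih
      set F : (Fin d → ℝ) → ℝ≥0∞ :=
        fun y => ∫⁻ x, ENNReal.ofReal (k x y) * ENNReal.ofReal (p t x) with hFdef
      set F' : (Fin d → ℝ) → ℝ≥0∞ :=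
        fun y => ∫⁻ x, ENNReal.ofReal (k x y) * g t x with hF'def
      set κh : (Fin d → ℝ) → (Fin d → ℝ) → ℝ≥0∞ := fun x y =>
        ∑ j, (X t j).indicator (fun _ => (1:ℝ≥0∞)) x * ENNReal.ofReal (k (xr t j) y) with hκhdef
      have hswap : ∀ (H : (Fin d → ℝ) → (Fin d → ℝ) → ℝ≥0∞),
          Measurable (Function.uncurry H) →
          (∫⁻ x, ∫⁻ y, H x y) = ∫⁻ y, ∫⁻ x, H x y :=
        fun H hH => lintegral_lintegral_swap hH.aemeasurable
      have hF_meas : Measurable F :=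
        Measurable.lintegral_prod_left'
          (hκ_meas.mul (((hp_meas t).ennreal_ofReal).comp measurable_fst))
      have hF'_meas : Measurable F' :=
        Measurable.lintegral_prod_left' (hκ_meas.mul ((hg_meas t).comp measurable_fst))
      have hκh_measy : ∀ x, Measurable (κh x) := fun x =>
        Finset.measurable_sum _ fun j _ => ((hk_mx (xr t j)).ennreal_ofReal).const_mul _
      have hκh_measx : ∀ y, Measurable fun x => κh x y := fun y =>
        Finset.measurable_sum _ fun j _ =>
          (measurable_one.indicator (hX_meas t j)).mul measurable_const
      have hκh_meas : Measurable (Function.uncurry κh) := by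
        have heq : Function.uncurry κh = fun q : (Fin d → ℝ) × (Fin d → ℝ) =>
            ∑ j, ((X t j).indicator (fun _ => (1:ℝ≥0∞)) q.1) * ENNReal.ofReal (k (xr t j) q.2) :=
          rfl
        rw [heq]
        exact Finset.measurable_sum _ fun j _ =>
          ((measurable_one.indicator (hX_meas t j)).comp measurable_fst).mul
            (((hk_mx (xr t j)).ennreal_ofReal).comp measurable_snd)
      have hFint : (∫⁻ y, F y) = 1 := by
        rw [hFdef, ← hswap (fun x y => ENNReal.ofReal (k x y) * ENNReal.ofReal (p t x)) (hκ_meas.mul (((hp_meas t).ennreal_ofReal).comp measurable_fst))]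
        calc (∫⁻ x, ∫⁻ y, ENNReal.ofReal (k x y) * ENNReal.ofReal (p t x))
            = ∫⁻ x, ENNReal.ofReal (p t x) := by
              refine lintegral_congr fun x => ?_
              rw [lintegral_mul_const _ (hk_mx x).ennreal_ofReal, hκ_one x, one_mul]
          _ = 1 := hf1
      have hfin_ae : ∀ᵐ y : Fin d → ℝ, F y ≠ ∞ :=
        (ae_lt_top hF_meas (by rw [hFint]; exact ENNReal.one_ne_top)).mono fun y hy => hy.ne
      have hae : ∀ᵐ y : Fin d → ℝ, ENNReal.ofReal (p (t+1) y) = F y := by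
        refine hfin_ae.mono fun y hy => ?_
        have hmeasxy : Measurable fun x => k x y * p t x := (hk_my y).mul (hp_meas t)
        have hnn : ∀ x, 0 ≤ k x y * p t x := fun x => mul_nonneg (hk_nonneg x y) (hp_nonneg t x)
        have hofr : (fun x => ENNReal.ofReal (k x y * p t x))
            = fun x => ENNReal.ofReal (k x y) * ENNReal.ofReal (p t x) :=
          funext fun x => ENNReal.ofReal_mul (hk_nonneg x y)
        rw [hp_rec t y, integral_eq_lintegral_of_nonneg_ae
          (Filter.Eventually.of_forall hnn) hmeasxy.aestronglyMeasurable, hofr]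
        exact ENNReal.ofReal_toReal hy
      have hf1' : (∫⁻ y, ENNReal.ofReal (p (t+1) y)) = 1 := by
        rw [lintegral_congr_ae hae]; exact hFint
      have hint' : Integrable (p (t+1)) := by
        refine ⟨(hp_meas (t+1)).aestronglyMeasurable, ?_⟩
        rw [hasFiniteIntegral_iff_ofReal (Filter.Eventually.of_forall (hp_nonneg (t+1))), hf1']
        exact ENNReal.one_lt_top
      have hm' : Phat (t+1) Set.univ = 1 := by
        rw [hPhat_apply (t+1) _ MeasurableSet.univ, setLIntegral_univ]
        calc (∫⁻ y, g (t+1) y)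
            = ∫⁻ y, ∑ j, Phat t (X t j) * ENNReal.ofReal (k (xr t j) y) := rfl
          _ = ∑ j, ∫⁻ y, Phat t (X t j) * ENNReal.ofReal (k (xr t j) y) :=
              lintegral_finset_sum _ fun j _ => ((hk_mx (xr t j)).ennreal_ofReal).const_mul _
          _ = ∑ j, Phat t (X t j) * ∫⁻ y, ENNReal.ofReal (k (xr t j) y) :=
              Finset.sum_congr rfl fun j _ => lintegral_const_mul _ (hk_mx (xr t j)).ennreal_ofReal
          _ = ∑ j, Phat t (X t j) := by
              refine Finset.sum_congr rfl fun j _ => by rw [hκ_one, mul_one]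
          _ = 1 := (hPhat_part t).trans hm
      have hκh_x : ∀ j x, x ∈ X t j → ∀ y, κh x y = ENNReal.ofReal (k (xr t j) y) := by
        intro j x hx y
        show (∑ j', (X t j').indicator (fun _ => (1:ℝ≥0∞)) x * ENNReal.ofReal (k (xr t j') y))
          = ENNReal.ofReal (k (xr t j) y)
        rw [Finset.sum_eq_single j]
        · rw [Set.indicator_of_mem hx, one_mul]
        · intro j' _ hj'
          have hx' : x ∉ X t j' := fun hx'' => Set.disjoint_left.1 (hX_disj t hj') hx'' hx
          rw [Set.indicator_of_notMem hx', zero_mul]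
        · intro hj; exact absurd (Finset.mem_univ j) hj
      have hGrep : ∀ y, g (t+1) y = ∫⁻ x, κh x y * g t x := by
        intro y
        have hterm : ∀ j : Fin (K t),
            Phat t (X t j) * ENNReal.ofReal (k (xr t j) y)
            = ∫⁻ x, (X t j).indicator (fun _ => (1:ℝ≥0∞)) x * ENNReal.ofReal (k (xr t j) y) * g t x := by
          intro j
          have hpt : ∀ x, (X t j).indicator (fun _ => (1:ℝ≥0∞)) x * ENNReal.ofReal (k (xr t j) y) * g t x
              = (X t j).indicator (fun x => ENNReal.ofReal (k (xr t j) y) * g t x) x := by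
            intro x
            by_cases hx : x ∈ X t j
            · rw [Set.indicator_of_mem hx, Set.indicator_of_mem hx, one_mul]
            · rw [Set.indicator_of_notMem hx, Set.indicator_of_notMem hx, zero_mul, zero_mul]
          rw [lintegral_congr hpt, lintegral_indicator (hX_meas t j),
            lintegral_const_mul _ (hg_meas t), ← hPhat_apply t _ (hX_meas t j)]
          exact mul_comm _ _
        calc g (t+1) y = ∑ j, Phat t (X t j) * ENNReal.ofReal (k (xr t j) y) := rfl
          _ = ∑ j, ∫⁻ x, (X t j).indicator (fun _ => (1:ℝ≥0∞)) x * ENNReal.ofReal (k (xr t j) y) * g t x :=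
              Finset.sum_congr rfl fun j _ => hterm j
          _ = ∫⁻ x, ∑ j, (X t j).indicator (fun _ => (1:ℝ≥0∞)) x * ENNReal.ofReal (k (xr t j) y) * g t x :=
              (lintegral_finset_sum _ fun j _ =>
                ((measurable_one.indicator (hX_meas t j)).mul measurable_const).mul (hg_meas t)).symm
          _ = ∫⁻ x, κh x y * g t x := lintegral_congr fun x => by
              show _ = (∑ j, (X t j).indicator (fun _ => (1:ℝ≥0∞)) x * ENNReal.ofReal (k (xr t j) y)) * g t x
              rw [Finset.sum_mul]
      have he_meas : Measurable fun x => edd (ENNReal.ofReal (p t x)) (g t x) :=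
        (((hp_meas t).ennreal_ofReal).sub (hg_meas t)).add
          ((hg_meas t).sub ((hp_meas t).ennreal_ofReal))
      have step4 : (∫⁻ y, edd (F y) (F' y)) ≤ ∫⁻ x, edd (ENNReal.ofReal (p t x)) (g t x) := by
        have hm1 : Measurable (Function.uncurry fun x y =>
            ENNReal.ofReal (k x y) * edd (ENNReal.ofReal (p t x)) (g t x)) :=
          hκ_meas.mul (he_meas.comp measurable_fst)
        calc (∫⁻ y, edd (F y) (F' y))
            ≤ ∫⁻ y, ∫⁻ x, ENNReal.ofReal (k x y) * edd (ENNReal.ofReal (p t x)) (g t x) := by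
              refine lintegral_mono fun y => ?_
              refine le_trans (edd_lintegral volume
                (((hk_my y).ennreal_ofReal).mul ((hp_meas t).ennreal_ofReal))
                (((hk_my y).ennreal_ofReal).mul (hg_meas t))) ?_
              exact lintegral_mono fun x => edd_mul_left _ _ _
          _ = ∫⁻ x, ∫⁻ y, ENNReal.ofReal (k x y) * edd (ENNReal.ofReal (p t x)) (g t x) :=
              (hswap (fun x y => ENNReal.ofReal (k x y) * edd (ENNReal.ofReal (p t x)) (g t x))
                hm1).symm
          _ = ∫⁻ x, edd (ENNReal.ofReal (p t x)) (g t x) := by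
              refine lintegral_congr fun x => ?_
              rw [lintegral_mul_const _ (hk_mx x).ennreal_ofReal, hκ_one x, one_mul]
      have step5 : (∫⁻ y, edd (F' y) (g (t+1) y))
          ≤ ∑ j, ENNReal.ofReal (2 * S t j) * Phat t (X t j) := by
        have hw_meas : Measurable (Function.uncurry fun x y =>
            edd (ENNReal.ofReal (k x y)) (κh x y)) :=
          (hκ_meas.sub hκh_meas).add (hκh_meas.sub hκ_meas)
        have hwy_meas : ∀ x, Measurable fun y => edd (ENNReal.ofReal (k x y)) (κh x y) := fun x =>
          (((hk_mx x).ennreal_ofReal).sub (hκh_measy x)).add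
            ((hκh_measy x).sub ((hk_mx x).ennreal_ofReal))
        calc (∫⁻ y, edd (F' y) (g (t+1) y))
            ≤ ∫⁻ y, ∫⁻ x, edd (ENNReal.ofReal (k x y)) (κh x y) * g t x := by
              refine lintegral_mono fun y => ?_
              rw [hGrep y]
              refine le_trans (edd_lintegral volume
                (((hk_my y).ennreal_ofReal).mul (hg_meas t))
                ((hκh_measx y).mul (hg_meas t))) ?_
              exact lintegral_mono fun x => edd_mul_right _ _ _
          _ = ∫⁻ x, ∫⁻ y, edd (ENNReal.ofReal (k x y)) (κh x y) * g t x :=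
              (hswap (fun x y => edd (ENNReal.ofReal (k x y)) (κh x y) * g t x)
                (hw_meas.mul ((hg_meas t).comp measurable_fst))).symm
          _ = ∫⁻ x, (∫⁻ y, edd (ENNReal.ofReal (k x y)) (κh x y)) * g t x :=
              lintegral_congr fun x => lintegral_mul_const _ (hwy_meas x)
          _ = ∑ j, ∫⁻ x in X t j, (∫⁻ y, edd (ENNReal.ofReal (k x y)) (κh x y)) * g t x := by
              rw [← setLIntegral_univ, ← hX_cover t, lintegral_iUnion (hX_meas t) (hX_disj t),
                tsum_fintype]
          _ ≤ ∑ j, ENNReal.ofReal (2 * S t j) * Phat t (X t j) := by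
              refine Finset.sum_le_sum fun j _ => ?_
              have hb : ∀ x ∈ X t j, (∫⁻ y, edd (ENNReal.ofReal (k x y)) (κh x y)) * g t x
                  ≤ ENNReal.ofReal (2 * S t j) * g t x := by
                intro x hx
                have h2 : ∀ y, edd (ENNReal.ofReal (k x y)) (κh x y)
                    = ENNReal.ofReal |k x y - k (xr t j) y| := by
                  intro y
                  rw [hκh_x j x hx y]
                  exact edd_ofReal (hk_nonneg x y) (hk_nonneg (xr t j) y)
                have h1 : (∫⁻ y, edd (ENNReal.ofReal (k x y)) (κh x y))
                    = ENNReal.ofReal (2 * s x (xr t j)) := by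
                  rw [lintegral_congr h2, hkd]
                rw [h1]
                exact mul_le_mul_left (ENNReal.ofReal_le_ofReal
                  (by have := hS_mem t j x hx; linarith)) _
              calc (∫⁻ x in X t j, (∫⁻ y, edd (ENNReal.ofReal (k x y)) (κh x y)) * g t x)
                  ≤ ∫⁻ x in X t j, ENNReal.ofReal (2 * S t j) * g t x :=
                    setLIntegral_mono ((hg_meas t).const_mul _) hb
                _ = ENNReal.ofReal (2 * S t j) * ∫⁻ x in X t j, g t x :=
                    lintegral_const_mul _ (hg_meas t)
                _ = ENNReal.ofReal (2 * S t j) * Phat t (X t j) := by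
                    rw [← hPhat_apply t _ (hX_meas t j)]
      refine ⟨hint', hf1', hm', ?_⟩
      have hstep1 : (∫⁻ y, edd (ENNReal.ofReal (p (t+1) y)) (g (t+1) y))
          = ∫⁻ y, edd (F y) (g (t+1) y) :=
        lintegral_congr_ae (hae.mono fun y hy => by
          show edd (ENNReal.ofReal (p (t+1) y)) (g (t+1) y) = edd (F y) (g (t+1) y)
          rw [hy])
      have hEG_meas : Measurable fun y => edd (F y) (F' y) :=
        (hF_meas.sub hF'_meas).add (hF'_meas.sub hF_meas)
      calc (∫⁻ y, edd (ENNReal.ofReal (p (t+1) y)) (g (t+1) y))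
          = ∫⁻ y, edd (F y) (g (t+1) y) := hstep1
        _ ≤ ∫⁻ y, (edd (F y) (F' y) + edd (F' y) (g (t+1) y)) :=
            lintegral_mono fun y => edd_triangle _ _ _
        _ = (∫⁻ y, edd (F y) (F' y)) + ∫⁻ y, edd (F' y) (g (t+1) y) :=
            lintegral_add_left hEG_meas _
        _ ≤ (∑ t' ∈ Finset.range t, ∑ j, ENNReal.ofReal (2 * S t' j) * Phat t' (X t' j))
            + ∑ j, ENNReal.ofReal (2 * S t j) * Phat t (X t j) :=
            add_le_add (le_trans step4 hD) step5
        _ = ∑ t' ∈ Finset.range (t+1), ∑ j, ENNReal.ofReal (2 * S t' j) * Phat t' (X t' j) :=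
            (Finset.sum_range_succ _ t).symm
  -- final assembly
  obtain ⟨hint_s, hf1_s, hm_s, hD_s⟩ := main sT
  have hc_fin : ∀ t j, Phat t (X t j) ≠ ∞ := by
    intro t j
    have h1 : Phat t (X t j) ≤ 1 := by
      rw [← (main t).2.2.1]; exact measure_mono (Set.subset_univ _)
    exact (lt_of_le_of_lt h1 ENNReal.one_lt_top).ne
  set E : ℝ := ∑ t ∈ Finset.range sT, ∑ j, S t j * (Phat t (X t j)).toReal with hEdef
  have hE_nonneg : 0 ≤ E := Finset.sum_nonneg fun t _ => Finset.sum_nonneg fun j _ =>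
    mul_nonneg (hS_nonneg t j) ENNReal.toReal_nonneg
  have hDE : (∑ t' ∈ Finset.range sT, ∑ j, ENNReal.ofReal (2 * S t' j) * Phat t' (X t' j))
      = ENNReal.ofReal (2 * E) := by
    have h1 : ∀ t' j, ENNReal.ofReal (2 * S t' j) * Phat t' (X t' j)
        = ENNReal.ofReal (2 * S t' j * (Phat t' (X t' j)).toReal) := by
      intro t' j
      rw [ENNReal.ofReal_mul (mul_nonneg (by norm_num) (hS_nonneg t' j)),
        ENNReal.ofReal_toReal (hc_fin t' j)]
    calc (∑ t' ∈ Finset.range sT, ∑ j, ENNReal.ofReal (2 * S t' j) * Phat t' (X t' j))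
        = ∑ t' ∈ Finset.range sT, ∑ j,
            ENNReal.ofReal (2 * S t' j * (Phat t' (X t' j)).toReal) :=
          Finset.sum_congr rfl fun t' _ => Finset.sum_congr rfl fun j _ => h1 t' j
      _ = ∑ t' ∈ Finset.range sT,
            ENNReal.ofReal (∑ j, 2 * S t' j * (Phat t' (X t' j)).toReal) :=
          Finset.sum_congr rfl fun t' _ => (ENNReal.ofReal_sum_of_nonneg fun j _ =>
            mul_nonneg (mul_nonneg (by norm_num) (hS_nonneg t' j)) ENNReal.toReal_nonneg).symm
      _ = ENNReal.ofReal (∑ t' ∈ Finset.range sT, ∑ j,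
            2 * S t' j * (Phat t' (X t' j)).toReal) :=
          (ENNReal.ofReal_sum_of_nonneg fun t' _ => Finset.sum_nonneg fun j _ =>
            mul_nonneg (mul_nonneg (by norm_num) (hS_nonneg t' j)) ENNReal.toReal_nonneg).symm
      _ = ENNReal.ofReal (2 * E) := by
          rw [hEdef, Finset.mul_sum]
          congr 1
          refine Finset.sum_congr rfl fun t' _ => ?_
          rw [Finset.mul_sum]
          exact Finset.sum_congr rfl fun j _ => (mul_assoc _ _ _)
  set Dp : ℝ≥0∞ := ∫⁻ y, (ENNReal.ofReal (p sT y) - g sT y) with hDpdef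
  set Dm : ℝ≥0∞ := ∫⁻ y, (g sT y - ENNReal.ofReal (p sT y)) with hDmdef
  have hsplit : (∫⁻ y, edd (ENNReal.ofReal (p sT y)) (g sT y)) = Dp + Dm :=
    lintegral_add_left (((hp_meas sT).ennreal_ofReal).sub (hg_meas sT)) _
  have hDsum_le : Dp + Dm ≤ ENNReal.ofReal (2 * E) := by
    rw [← hsplit, ← hDE]; exact hD_s
  have hDp_fin : Dp ≠ ∞ :=
    (lt_of_le_of_lt (le_trans le_self_add hDsum_le) ENNReal.ofReal_lt_top).ne
  have hDm_fin : Dm ≠ ∞ :=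
    (lt_of_le_of_lt (le_trans le_add_self hDsum_le) ENNReal.ofReal_lt_top).ne
  have hDto : Dp.toReal + Dm.toReal ≤ 2 * E := by
    rw [← ENNReal.toReal_add hDp_fin hDm_fin]
    calc (Dp + Dm).toReal ≤ (ENNReal.ofReal (2 * E)).toReal :=
          ENNReal.toReal_mono ENNReal.ofReal_ne_top hDsum_le
      _ = 2 * E := ENNReal.toReal_ofReal (by linarith)
  -- per-set bounds
  have hPA : ∀ A : Set (Fin d → ℝ), MeasurableSet A →
      P sT A = ∫⁻ y in A, ENNReal.ofReal (p sT y) := by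
    intro A hA; rw [hP sT, withDensity_apply _ hA]
  have hPfin : ∀ A : Set (Fin d → ℝ), MeasurableSet A → P sT A ≠ ∞ := by
    intro A hA
    rw [hPA A hA]
    exact (lt_of_le_of_lt (le_trans (setLIntegral_le_lintegral _ _) (le_of_eq hf1_s))
      ENNReal.one_lt_top).ne
  have hQfin : ∀ A : Set (Fin d → ℝ), Phat sT A ≠ ∞ := by
    intro A
    have h1 : Phat sT A ≤ 1 := by rw [← hm_s]; exact measure_mono (Set.subset_univ _)
    exact (lt_of_le_of_lt h1 ENNReal.one_lt_top).ne
  have hdiff : ∀ A : Set (Fin d → ℝ), MeasurableSet A →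
      (P sT A).toReal - (Phat sT A).toReal ≤ Dp.toReal := by
    intro A hA
    refine le_trans (toReal_sub_le' (hPfin A hA) (hQfin A)) (ENNReal.toReal_mono hDp_fin ?_)
    rw [hPA A hA, hPhat_apply sT A hA]
    calc (∫⁻ y in A, ENNReal.ofReal (p sT y)) - ∫⁻ y in A, g sT y
        ≤ ∫⁻ y in A, (ENNReal.ofReal (p sT y) - g sT y) :=
          lintegral_sub_le _ _ (hg_meas sT)
      _ ≤ Dp := setLIntegral_le_lintegral _ _
  have hdiff' : ∀ A : Set (Fin d → ℝ), MeasurableSet A →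
      (Phat sT A).toReal - (P sT A).toReal ≤ Dm.toReal := by
    intro A hA
    refine le_trans (toReal_sub_le' (hQfin A) (hPfin A hA)) (ENNReal.toReal_mono hDm_fin ?_)
    rw [hPA A hA, hPhat_apply sT A hA]
    calc (∫⁻ y in A, g sT y) - ∫⁻ y in A, ENNReal.ofReal (p sT y)
        ≤ ∫⁻ y in A, (g sT y - ENNReal.ofReal (p sT y)) :=
          lintegral_sub_le _ _ ((hp_meas sT).ennreal_ofReal)
      _ ≤ Dm := setLIntegral_le_lintegral _ _
  have hPsum : ∀ A : Set (Fin d → ℝ), MeasurableSet A →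
      (P sT A).toReal + (P sT Aᶜ).toReal = 1 := by
    intro A hA
    rw [← ENNReal.toReal_add (hPfin A hA) (hPfin Aᶜ hA.compl), measure_add_measure_compl hA]
    rw [show P sT Set.univ = 1 from ?_, ENNReal.toReal_one]
    rw [hPA Set.univ MeasurableSet.univ, setLIntegral_univ]; exact hf1_s
  have hQsum : ∀ A : Set (Fin d → ℝ), MeasurableSet A →
      (Phat sT A).toReal + (Phat sT Aᶜ).toReal = 1 := by
    intro A hA
    rw [← ENNReal.toReal_add (hQfin A) (hQfin Aᶜ), measure_add_measure_compl hA, hm_s,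
      ENNReal.toReal_one]
  -- conclude
  show tv (P sT) (Phat sT) ≤ E
  unfold tv
  refine Real.iSup_le (fun A => ?_) hE_nonneg
  obtain ⟨A, hA⟩ := A
  show |(P sT A).toReal - (Phat sT A).toReal| ≤ E
  have h1 := hdiff A hA
  have h2 := hdiff' A hA
  have h3 := hdiff Aᶜ hA.compl
  have h4 := hdiff' Aᶜ hA.compl
  have h5 := hPsum A hA
  have h6 := hQsum A hA
  rw [abs_sub_le_iff]
  constructor <;> linarith
end
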